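/- arXiv:1501.00185 — 2 statements merged into one kernel-verified Lean document; each statement's English description precedes it below -/
import Mathlib

section
/- Let k be a field of characteristic p > 0 and A = k[x_e : e ∈ ℕ]/(x_e^p − x_e). Then the maximal ideals of A are in canonical bijection with the p-adic integers ℤ_p: to α = Σ_{e≥0} α_e p^e (with digits α_e ∈ {0,…,p−1}) one associates the kernel of the k-algebra map sending x_e to the image of α_e in k, and every maximal ideal arises this way from a unique α. -/
/-!
Digit expansion identifies `ℤ_[p]` with `ℕ → ZMod p`: the digits determine every
approximation `appr n`, hence the element, and each digit sequence is realised as the limit of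
its partial sums.

On the algebraic side, in the residue field of a maximal ideal containing all `X i ^ p - X i`,
each `X i` is a root of `T ^ p - T`, so it lies in the prime field. Hence the ideal is the
kernel of evaluation at a point with coordinates in `ZMod p`, and distinct points give
distinct kernels.
-/

/-- The `e`-th digit of the `p`-adic integer `α`, i.e. the coefficient `α_e ∈ {0, …, p-1}`
in the expansion `α = Σ_e α_e p^e`, extracted from the approximation `α.appr (e+1)`
of `α` modulo `p^(e+1)`. -/
noncomputable def padicDigit {p : ℕ} [Fact p.Prime] (α : ℤ_[p]) (e : ℕ) : ℕ :=
  α.appr (e + 1) / p ^ e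

theorem Nat.sum_range_mul_pow_lt_pow {p : ℕ} {c : ℕ → ℕ} (hc : ∀ e, c e < p) (n : ℕ) :
    ∑ e ∈ Finset.range n, c e * p ^ e < p ^ n := by
  induction n with
  | zero => simp
  | succ n ih =>
    rw [Finset.sum_range_succ, pow_succ]
    nlinarith [hc n, Nat.pow_pos (n := n) ((Nat.zero_le _).trans_lt (hc n))]

namespace PadicInt

variable {p : ℕ} [Fact p.Prime]

theorem toZModPow_apply (x : ℤ_[p]) (n : ℕ) : toZModPow n x = x.appr n := rfl

theorem padicDigit_lt (x : ℤ_[p]) (e : ℕ) : padicDigit x e < p := by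
  rw [padicDigit, Nat.div_lt_iff_lt_mul (Nat.pos_of_neZero _), ← pow_succ']
  exact x.appr_lt (e + 1)

theorem appr_add_one (x : ℤ_[p]) (e : ℕ) :
    x.appr (e + 1) = x.appr e + padicDigit x e * p ^ e := by
  obtain ⟨m, hm⟩ := x.dvd_appr_sub_appr e (e + 1) e.le_succ
  have hsucc : x.appr (e + 1) = x.appr e + p ^ e * m := by
    have : x.appr e ≤ x.appr (e + 1) := x.appr_mono e.le_succ
    omega
  have hdigit : padicDigit x e = m := by
    rw [padicDigit, hsucc, Nat.add_mul_div_left _ _ (Nat.pos_of_neZero _),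
      Nat.div_eq_of_lt (x.appr_lt e), zero_add]
  rw [hsucc, hdigit, mul_comm]

theorem appr_eq_sum_padicDigit (x : ℤ_[p]) (n : ℕ) :
    x.appr n = ∑ e ∈ Finset.range n, padicDigit x e * p ^ e := by
  induction n with
  | zero => simpa using x.appr_lt 0
  | succ n ih => rw [Finset.sum_range_succ, ← ih, appr_add_one]

theorem padicDigit_injective : Function.Injective (padicDigit : ℤ_[p] → ℕ → ℕ) := by
  intro x y h
  refine ext_of_toZModPow.mp fun n => ?_
  simp only [toZModPow_apply, appr_eq_sum_padicDigit, h]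

theorem exists_padicDigit_eq {c : ℕ → ℕ} (hc : ∀ e, c e < p) :
    ∃ x : ℤ_[p], padicDigit x = c := by
  set s : ℕ → ℕ := fun n => ∑ e ∈ Finset.range n, c e * p ^ e
  have hs : ∀ n, s (n + 1) = s n + c n * p ^ n := fun n => Finset.sum_range_succ _ n
  have hdvd : ∀ n, (p : ℤ) ^ n ∣ (s (n + 1) : ℤ) - s n := fun n =>
    ⟨c n, by rw [hs]; push_cast; ring⟩
  set x := ofIntSeq _ (isCauSeq_padicNorm_of_pow_dvd_sub (fun n => (s n : ℤ)) p hdvd)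
  have happr : ∀ n, x.appr n = s n := by
    intro n
    have h := toZModPow_ofIntSeq_of_pow_dvd_sub (fun n => (s n : ℤ)) p hdvd n
    rw [toZModPow_apply, Int.cast_natCast, ZMod.natCast_eq_natCast_iff'] at h
    rwa [Nat.mod_eq_of_lt (x.appr_lt n), Nat.mod_eq_of_lt (Nat.sum_range_mul_pow_lt_pow hc n)]
      at h
  refine ⟨x, funext fun e => ?_⟩
  rw [padicDigit, happr, hs, Nat.add_mul_div_right _ _ (Nat.pos_of_neZero _),
    Nat.div_eq_of_lt (Nat.sum_range_mul_pow_lt_pow hc e), zero_add]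

noncomputable def digitsEquiv : ℤ_[p] ≃ (ℕ → ZMod p) :=
  Equiv.ofBijective (fun x e => padicDigit x e) <| by
    refine ⟨fun x y h => padicDigit_injective <| funext fun e => ?_, fun c => ?_⟩
    · simpa [ZMod.val_cast_of_lt (padicDigit_lt _ _)] using congr_arg ZMod.val (congr_fun h e)
    · obtain ⟨x, hx⟩ := exists_padicDigit_eq (c := fun e => (c e).val) fun e => ZMod.val_lt _
      exact ⟨x, funext fun e => by simp [hx]⟩

theorem digitsEquiv_apply (x : ℤ_[p]) (e : ℕ) : digitsEquiv x e = padicDigit x e := rfl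

end PadicInt

theorem ZMod.exists_castHom_eq_of_pow_eq_self (p : ℕ) [Fact p.Prime] {L : Type*} [Field L]
    [CharP L p] {t : L} (ht : t ^ p = t) : ∃ a : ZMod p, ZMod.castHom dvd_rfl L a = t := by
  rwa [← Subfield.mem_bot_iff_pow_eq_self L p, ← ZMod.fieldRange_castHom_eq_bot] at ht

namespace MvPolynomial

variable {σ k : Type*} [Field k]

theorem ker_aeval_isMaximal (c : σ → k) :
    (RingHom.ker (aeval c : MvPolynomial σ k →ₐ[k] k).toRingHom).IsMaximal :=
  RingHom.ker_isMaximal_of_surjective _ fun z => ⟨C z, by simp⟩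

theorem ker_aeval_eq_of_X_sub_C_mem {M : Ideal (MvPolynomial σ k)} [M.IsMaximal] {c : σ → k}
    (h : ∀ i, X i - C (c i) ∈ M) :
    RingHom.ker (aeval c : MvPolynomial σ k →ₐ[k] k).toRingHom = M := by
  refine (ker_aeval_isMaximal c).eq_of_le ‹M.IsMaximal›.ne_top fun f hf => ?_
  have hmk : Ideal.Quotient.mk M = ((Ideal.Quotient.mk M).comp C).comp (eval c) := by
    ext i
    · simp
    · simpa using Ideal.Quotient.eq.mpr (h i)
  have hev : eval c f = 0 := by simpa [RingHom.mem_ker, aeval_eq_eval] using hf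
  rw [← Ideal.Quotient.eq_zero_iff_mem, hmk, RingHom.comp_apply, hev, map_zero]

section CharP

variable (p : ℕ) [CharP k p]

theorem ker_aeval_castHom_injective :
    Function.Injective fun c : σ → ZMod p =>
      RingHom.ker (aeval (ZMod.castHom dvd_rfl k ∘ c) : MvPolynomial σ k →ₐ[k] k).toRingHom := by
  intro c c' h
  dsimp only at h
  funext i
  have hmem : X i - C (ZMod.castHom dvd_rfl k (c i)) ∈
      RingHom.ker (aeval (ZMod.castHom dvd_rfl k ∘ c) : MvPolynomial σ k →ₐ[k] k).toRingHom := by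
    simp
  rw [h, RingHom.mem_ker] at hmem
  simp only [AlgHom.toRingHom_eq_coe, RingHom.coe_coe, map_sub, aeval_X, aeval_C,
    Function.comp_apply, Algebra.algebraMap_self, RingHom.id_apply, sub_eq_zero] at hmem
  exact ZMod.castHom_injective k hmem.symm

variable [Fact p.Prime]

theorem span_X_pow_sub_X_le_ker_aeval_castHom (c : σ → ZMod p) :
    Ideal.span (Set.range fun i => X i ^ p - X i) ≤
      RingHom.ker (aeval (ZMod.castHom dvd_rfl k ∘ c) : MvPolynomial σ k →ₐ[k] k).toRingHom := by
  rw [Ideal.span_le]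
  rintro _ ⟨i, rfl⟩
  simp [-ZMod.castHom_apply, ← map_pow (ZMod.castHom dvd_rfl k)]

theorem exists_ker_aeval_castHom_eq {M : Ideal (MvPolynomial σ k)} [M.IsMaximal]
    (hM : Ideal.span (Set.range fun i => X i ^ p - X i) ≤ M) :
    ∃ c : σ → ZMod p,
      RingHom.ker (aeval (ZMod.castHom dvd_rfl k ∘ c) : MvPolynomial σ k →ₐ[k] k).toRingHom =
        M := by
  let := Ideal.Quotient.field M
  have := charP_of_injective_algebraMap (algebraMap k (MvPolynomial σ k ⧸ M)).injective p
  have hroot : ∀ i, ∃ a : ZMod p, ZMod.castHom dvd_rfl _ a = Ideal.Quotient.mk M (X i) := by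
    refine fun i => ZMod.exists_castHom_eq_of_pow_eq_self p ?_
    rw [← map_pow, ← sub_eq_zero, ← map_sub, Ideal.Quotient.eq_zero_iff_mem]
    exact hM (Ideal.subset_span ⟨i, rfl⟩)
  choose c hc using hroot
  refine ⟨c, ker_aeval_eq_of_X_sub_C_mem fun i => ?_⟩
  rw [← Ideal.Quotient.eq_zero_iff_mem, map_sub, ← hc i, sub_eq_zero]
  exact RingHom.congr_fun (Subsingleton.elim (ZMod.castHom dvd_rfl _)
    (((Ideal.Quotient.mk M).comp C).comp (ZMod.castHom dvd_rfl k))) (c i)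

noncomputable def zmodPointsEquivMaximalSpectrum :
    (σ → ZMod p) ≃ MaximalSpectrum
      (MvPolynomial σ k ⧸ Ideal.span (Set.range fun i => (X i : MvPolynomial σ k) ^ p - X i)) :=
  Equiv.ofBijective
    (fun c => ⟨_, (ker_aeval_isMaximal (ZMod.castHom dvd_rfl k ∘ c)).map_of_surjective_of_ker_le
      Ideal.Quotient.mk_surjective
      (Ideal.mk_ker.trans_le (span_X_pow_sub_X_le_ker_aeval_castHom p c))⟩) <| by
    refine ⟨fun c c' h => ker_aeval_castHom_injective (k := k) p ?_, fun M => ?_⟩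
    · simpa only [Function.comp_apply,
        Ideal.comap_map_mk (span_X_pow_sub_X_le_ker_aeval_castHom p _)] using
        congr_arg (Ideal.comap (Ideal.Quotient.mk _) ∘ MaximalSpectrum.asIdeal) h
    · have := Ideal.comap_isMaximal_of_surjective _ Ideal.Quotient.mk_surjective (K := M.asIdeal)
      obtain ⟨c, hc⟩ := exists_ker_aeval_castHom_eq p
        (M := Ideal.comap (Ideal.Quotient.mk _) M.asIdeal)
        fun f hf => by simp [Ideal.Quotient.eq_zero_iff_mem.mpr hf]
      refine ⟨c, MaximalSpectrum.ext ?_⟩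
      simp only [hc, Ideal.map_comap_of_surjective _ Ideal.Quotient.mk_surjective]

theorem zmodPointsEquivMaximalSpectrum_asIdeal (c : σ → ZMod p) :
    (zmodPointsEquivMaximalSpectrum p c).asIdeal = Ideal.map (Ideal.Quotient.mk _)
      (RingHom.ker (aeval (ZMod.castHom dvd_rfl k ∘ c) : MvPolynomial σ k →ₐ[k] k).toRingHom) :=
  rfl

end CharP

end MvPolynomial

/-- Let `k` be a field of characteristic `p > 0` and
`A = k[x_e : e ∈ ℕ] / (x_e ^ p - x_e)`.  The maximal ideals of `A` are in canonical
bijection with the `p`-adic integers: to `α = Σ_e α_e p^e` one associates the kernel of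
the `k`-algebra map `A → k` sending `x_e` to the image of the digit `α_e` in `k`. -/
theorem maximalSpectrum_equiv_padicInt
    (p : ℕ) [Fact p.Prime] (k : Type*) [Field k] [CharP k p]
    (I : Ideal (MvPolynomial ℕ k))
    (hI : I = Ideal.span (Set.range fun e : ℕ =>
      MvPolynomial.X e ^ p - MvPolynomial.X e)) :
    ∃ F : ℤ_[p] ≃ MaximalSpectrum (MvPolynomial ℕ k ⧸ I),
      ∀ α : ℤ_[p],
        (F α).asIdeal =
          Ideal.map (Ideal.Quotient.mk I)
            (RingHom.ker (MvPolynomial.aeval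
              (fun e : ℕ => ((padicDigit α e : ℕ) : k)) :
                MvPolynomial ℕ k →ₐ[k] k).toRingHom) := by
  subst hI
  refine ⟨PadicInt.digitsEquiv.trans (MvPolynomial.zmodPointsEquivMaximalSpectrum p),
    fun α => ?_⟩
  simp only [Equiv.trans_apply, MvPolynomial.zmodPointsEquivMaximalSpectrum_asIdeal,
    Function.comp_def, PadicInt.digitsEquiv_apply, map_natCast]
end

section
/- Let p be a prime, s : ℕ_{≥1} → {0,…,p−1} a sequence, and Λ ⊆ (0,1] ∩ ℚ a finite set. Suppose that for all sufficiently large N there exists λ ∈ Λ whose base-p expansion begins with the reversed segment s(N), s(N−1), …, s(1) (i.e., λ = s(N)/p + s(N−1)/p² + ⋯ + s(1)/p^N + ⋯). Then there exists L ≥ 0 such that for all n ≥ L there exists μ ∈ Λ with denominator prime to p (μ ∈ ℤ_{(p)}) whose base-p expansion begins with s(n), s(n−1), …, s(1). -/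
/-!
Let `E` bound the `p`-adic valuations of the denominators of the elements of `Λ`. If `λ ∈ Λ`
begins with `s(n+E), …, s(1)`, deleting its first `E` digits gives the expansion of
`p^E λ - c` for some natural number `c`: a rational with denominator prime to `p` and at most
`λ.den`, beginning with `s(n), …, s(1)`. An element `μ ∈ Λ` beginning with the same `n` digits is
within `p^(-n)` of it, whereas distinct rationals with denominators at most `D` are at least
`1/D²` apart. Hence `μ = p^E λ - c` as soon as `p^n > D²`.
-/

open Finset

theorem Real.tsum_div_pow_eq_ofDigits {b : ℕ} {a : ℕ → ℕ} (ha : ∀ m, a m < b) :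
    ∑' m, (a m : ℝ) / (b : ℝ) ^ (m + 1) = Real.ofDigits (fun m ↦ ⟨a m, ha m⟩) := by
  simp [Real.ofDigits, Real.ofDigitsTerm, div_eq_mul_inv]

theorem Real.exists_pow_mul_ofDigits_sub_natCast_eq {b : ℕ} (a : ℕ → Fin b) (n : ℕ) :
    ∃ c : ℕ, (b : ℝ) ^ n * Real.ofDigits a - c = Real.ofDigits (fun i ↦ a (i + n)) := by
  have hb : (b : ℝ) ≠ 0 := by exact_mod_cast (Fin.pos (a 0)).ne'
  refine ⟨∑ i ∈ range n, a i * b ^ (n - 1 - i), ?_⟩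
  have hterm : ∀ i ∈ range n,
      (b : ℝ) ^ n * Real.ofDigitsTerm a i = ((a i * b ^ (n - 1 - i) : ℕ) : ℝ) := by
    intro i hi
    have hsplit : (b : ℝ) ^ n = b ^ (n - 1 - i) * b ^ (i + 1) := by
      rw [← pow_add]; congr 1; have := mem_range.mp hi; omega
    rw [Real.ofDigitsTerm, hsplit]
    push_cast
    field_simp
  rw [Real.ofDigits_eq_sum_add_ofDigits a n, mul_add, mul_sum, sum_congr rfl hterm, ← mul_assoc,
    mul_inv_cancel₀ (pow_ne_zero _ hb)]
  push_cast
  ring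

theorem Rat.eq_of_abs_sub_lt_inv_den_mul_den {x y : ℚ}
    (h : |x - y| < ((x.den * y.den : ℕ) : ℚ)⁻¹) : x = y := by
  by_contra hxy
  have hnum : (1 : ℚ) ≤ |((x - y).num : ℚ)| := by
    exact_mod_cast Int.one_le_abs (Rat.num_ne_zero.mpr (sub_ne_zero.mpr hxy))
  have hden : ((x - y).den : ℚ) ≤ ((x.den * y.den : ℕ) : ℚ) := by
    exact_mod_cast Nat.le_of_dvd (by positivity) (Rat.sub_den_dvd x y)
  rw [← Rat.num_div_den (x - y), abs_div, Nat.abs_cast] at h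
  have : ((x.den * y.den : ℕ) : ℚ)⁻¹ ≤ |((x - y).num : ℚ)| / (x - y).den := by
    rw [inv_eq_one_div]
    gcongr
  linarith

theorem Rat.eq_of_ofDigits_agree {b n : ℕ} {x y : ℚ} {a c : ℕ → Fin b}
    (hx : (x : ℝ) = Real.ofDigits a) (hy : (y : ℝ) = Real.ofDigits c)
    (hac : ∀ i < n, a i = c i) (hn : x.den * y.den < b ^ n) : x = y := by
  apply Rat.eq_of_abs_sub_lt_inv_den_mul_den
  have hclose : ((|x - y| : ℚ) : ℝ) ≤ ((b : ℝ) ^ n)⁻¹ := by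
    push_cast
    rw [hx, hy]
    exact Real.abs_ofDigits_sub_ofDigits_le hac
  have hfar : ((b : ℝ) ^ n)⁻¹ < (((x.den * y.den : ℕ) : ℚ)⁻¹ : ℚ) := by
    push_cast
    gcongr
    exact_mod_cast hn
  exact_mod_cast hclose.trans_lt hfar

theorem Rat.den_pow_mul_dvd (p E : ℕ) (q : ℚ) : ((p : ℚ) ^ E * q).den ∣ q.den := by
  simpa using Rat.mul_den_dvd ((p ^ E : ℕ) : ℚ) q

theorem Rat.not_dvd_den_pow_mul {p E : ℕ} (hp : p.Prime) {q : ℚ}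
    (hE : q.den.factorization p ≤ E) : ¬ p ∣ ((p : ℚ) ^ E * q).den := by
  set e := q.den.factorization p
  set d := q.den / p ^ e
  have hq : (p : ℚ) ^ e * q = Rat.divInt q.num d := by
    have hp0 : (p : ℚ) ≠ 0 := by exact_mod_cast hp.ne_zero
    have hd : (d : ℚ) ≠ 0 := by exact_mod_cast (Nat.ordCompl_pos p q.den_nz).ne'
    have hden : (q.den : ℚ) = p ^ e * d := by
      exact_mod_cast (Nat.ordProj_mul_ordCompl_eq_self q.den p).symm
    conv_lhs => rw [← Rat.num_div_den q, hden]
    rw [Rat.divInt_eq_div]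
    push_cast
    field_simp
  have hdvd : ((p : ℚ) ^ E * q).den ∣ d := by
    rw [← Nat.sub_add_cancel hE, pow_add, mul_assoc, hq]
    refine (Rat.den_pow_mul_dvd _ _ _).trans ?_
    exact_mod_cast Rat.den_dvd q.num d
  exact fun h ↦ Nat.not_dvd_ordCompl hp q.den_nz (h.trans hdvd)

theorem eventually_starts_with_padically_integral_jump_general
    (p : ℕ) (hp : p.Prime) (s : ℕ → ℕ)
    (Λ : Finset ℚ)
    (dig : ℚ → ℕ → ℕ)
    (hdig : ∀ l ∈ Λ, (∀ m, dig l m < p) ∧ (∀ N : ℕ, ∃ m ≥ N, dig l m ≠ 0) ∧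
      (l : ℝ) = ∑' m : ℕ, (dig l m : ℝ) / (p : ℝ) ^ (m + 1))
    (hstart : ∃ N₀ : ℕ, ∀ N ≥ N₀, ∃ l ∈ Λ, ∀ j < N, dig l j = s (N - j)) :
    ∃ L : ℕ, ∀ n ≥ L, ∃ μ ∈ Λ, ¬ (p : ℕ) ∣ μ.den ∧ ∀ j < n, dig μ j = s (n - j) := by
  obtain ⟨N₀, hstart⟩ := hstart
  set E := Λ.sup fun l ↦ l.den.factorization p
  set D := Λ.sup Rat.den
  refine ⟨max N₀ (D * D), fun n hn ↦ ?_⟩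
  obtain ⟨μ, hμ, hμs⟩ := hstart n (le_of_max_le_left hn)
  obtain ⟨l, hl, hls⟩ := hstart (n + E) (by omega)
  obtain ⟨hμp, -, hμx⟩ := hdig μ hμ
  obtain ⟨hlp, -, hlx⟩ := hdig l hl
  rw [Real.tsum_div_pow_eq_ofDigits hμp] at hμx
  rw [Real.tsum_div_pow_eq_ofDigits hlp] at hlx
  obtain ⟨c, hc⟩ := Real.exists_pow_mul_ofDigits_sub_natCast_eq _ E
  have hμt : μ = p ^ E * l - c := by
    refine Rat.eq_of_ofDigits_agree (n := n) hμx (by push_cast; rw [hlx, hc]) (fun i hi ↦ ?_) ?_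
    · ext
      simp only [hμs i hi, hls (i + E) (by omega)]
      congr 1
      omega
    · calc μ.den * (p ^ E * l - c).den ≤ D * D := by
            rw [Rat.sub_natCast_den]
            exact Nat.mul_le_mul (le_sup hμ) <|
              (Nat.le_of_dvd l.pos (Rat.den_pow_mul_dvd p E l)).trans (le_sup hl)
        _ ≤ n := le_of_max_le_right hn
        _ < p ^ n := Nat.lt_pow_self hp.one_lt
  refine ⟨μ, hμ, ?_, hμs⟩
  rw [hμt, Rat.sub_natCast_den]
  exact Rat.not_dvd_den_pow_mul hp (le_sup (f := fun l ↦ l.den.factorization p) hl)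

/-- Let `p` be a prime, `s : ℕ_{≥1} → {0, …, p-1}` a sequence, and `Λ ⊆ (0,1] ∩ ℚ` a
finite set.  Each `λ ∈ Λ` has a unique base-`p` expansion with digits `dig λ`
(where `dig λ m` is the `(m+1)`-st digit) not eventually all zero.  Suppose that for all
sufficiently large `N` there exists `λ ∈ Λ` whose expansion begins with
`s(N), s(N-1), …, s(1)`.  Then there exists `L` such that for all `n ≥ L` there exists
`μ ∈ Λ` with denominator prime to `p` whose expansion begins with `s(n), …, s(1)`. -/
theorem eventually_starts_with_padically_integral_jump
    (p : ℕ) (hp : p.Prime) (s : ℕ → ℕ) (hs : ∀ n, s n < p)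
    (Λ : Finset ℚ) (hΛ : ∀ l ∈ Λ, 0 < l ∧ l ≤ 1)
    (dig : ℚ → ℕ → ℕ)
    (hdig : ∀ l ∈ Λ, (∀ m, dig l m < p) ∧ (∀ N : ℕ, ∃ m ≥ N, dig l m ≠ 0) ∧
      (l : ℝ) = ∑' m : ℕ, (dig l m : ℝ) / (p : ℝ) ^ (m + 1))
    (hstart : ∃ N₀ : ℕ, ∀ N ≥ N₀, ∃ l ∈ Λ, ∀ j < N, dig l j = s (N - j)) :
    ∃ L : ℕ, ∀ n ≥ L, ∃ μ ∈ Λ, ¬ (p : ℕ) ∣ μ.den ∧ ∀ j < n, dig μ j = s (n - j) :=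
  eventually_starts_with_padically_integral_jump_general p hp s Λ dig hdig hstart
end
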